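/- arXiv:2510.26156 — 3 statements merged into one kernel-verified Lean document; each statement's English description precedes it below -/
import Mathlib

section
/- For all α ∈ (0,1), the quantity (1/α)·(1/Γ(2α) − 1/(α·Γ(α)²)) is strictly positive. -/
open MeasureTheory intervalIntegral Set

lemma beta_real_repr (α : ℝ) (hα0 : 0 < α) :
    Real.Gamma α * Real.Gamma α
      = Real.Gamma (2 * α) * ∫ x in (0:ℝ)..1, x ^ (α - 1) * (1 - x) ^ (α - 1) := by
  have hαc : (0:ℝ) < (α : ℂ).re := by simpa using hα0
  have hbeta := Complex.Gamma_mul_Gamma_eq_betaIntegral hαc hαc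
  have hconv : EqOn (fun x : ℝ => (x:ℂ) ^ ((α:ℂ) - 1) * ((1:ℂ) - x) ^ ((α:ℂ) - 1))
      (fun x : ℝ => ((x ^ (α - 1) * (1 - x) ^ (α - 1) : ℝ) : ℂ)) (Set.uIcc (0:ℝ) 1) := by
    intro x hx
    rw [Set.uIcc_of_le zero_le_one] at hx
    simp only [Complex.ofReal_mul]
    rw [Complex.ofReal_cpow hx.1, Complex.ofReal_cpow (by linarith [hx.2])]
    push_cast
    ring
  have hbe : Complex.betaIntegral α α
      = ((∫ x in (0:ℝ)..1, x ^ (α - 1) * (1 - x) ^ (α - 1) : ℝ) : ℂ) := by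
    rw [Complex.betaIntegral, intervalIntegral.integral_congr hconv,
      intervalIntegral.integral_ofReal]
  rw [hbe] at hbeta
  have h2 : ((α:ℂ) + α) = ((2 * α : ℝ) : ℂ) := by push_cast; ring
  rw [h2, Complex.Gamma_ofReal, Complex.Gamma_ofReal] at hbeta
  exact_mod_cast hbeta

lemma beta_integrable (α : ℝ) (hα0 : 0 < α) :
    IntervalIntegrable (fun x : ℝ => x ^ (α - 1) * (1 - x) ^ (α - 1)) volume 0 1 := by
  have hαc : (0:ℝ) < (α : ℂ).re := by simpa using hα0
  have h := (Complex.betaIntegral_convergent hαc hαc).norm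
  rw [intervalIntegrable_iff_integrableOn_Ioc_of_le zero_le_one] at h ⊢
  refine h.congr_fun (fun x hx => ?_) measurableSet_Ioc
  have hx0 : (0:ℝ) ≤ x := hx.1.le
  have hx1 : x ≤ 1 := hx.2
  show ‖(x:ℂ) ^ ((α:ℂ) - 1) * (1 - (x:ℂ)) ^ ((α:ℂ) - 1)‖ = x ^ (α - 1) * (1 - x) ^ (α - 1)
  rw [show ((α:ℂ) - 1) = ((α - 1 : ℝ) : ℂ) by push_cast; ring,
    show ((1:ℂ) - (x:ℝ)) = (((1 - x : ℝ)) : ℂ) by push_cast; ring,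
    ← Complex.ofReal_cpow hx0, ← Complex.ofReal_cpow (by linarith), ← Complex.ofReal_mul,
    Complex.norm_real, Real.norm_eq_abs, abs_of_nonneg (mul_nonneg (Real.rpow_nonneg hx0 _) (Real.rpow_nonneg (by linarith) _))]

lemma beta_gt (α : ℝ) (hα0 : 0 < α) (hα1 : α < 1) :
    1 / α < ∫ x in (0:ℝ)..1, x ^ (α - 1) * (1 - x) ^ (α - 1) := by
  have hint := beta_integrable α hα0
  have hg : IntervalIntegrable (fun x : ℝ => x ^ (α - 1)) volume 0 1 :=
    intervalIntegral.intervalIntegrable_rpow' (by linarith)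
  have hgval : (∫ x in (0:ℝ)..1, x ^ (α - 1)) = 1 / α := by
    rw [integral_rpow (Or.inl (by linarith))]
    rw [Real.one_rpow]
    rw [Real.zero_rpow (by linarith)]
    rw [show α - 1 + 1 = α by ring]
    ring
  have hdiff : IntervalIntegrable
      (fun x : ℝ => x ^ (α - 1) * (1 - x) ^ (α - 1) - x ^ (α - 1)) volume 0 1 := hint.sub hg
  have hnonneg : ∀ x ∈ Ioc (0:ℝ) 1,
      0 ≤ x ^ (α - 1) * (1 - x) ^ (α - 1) - x ^ (α - 1) ∨ x = 1 := by
    intro x hx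
    have hx0 := hx.1
    rcases eq_or_lt_of_le hx.2 with h1 | h1
    · exact Or.inr h1
    · left
      have h2 : (1:ℝ) ≤ (1 - x) ^ (α - 1) :=
        Real.one_le_rpow_of_pos_of_le_one_of_nonpos (by linarith) (by linarith) (by linarith)
      have h3 : (0:ℝ) ≤ x ^ (α - 1) := Real.rpow_nonneg hx.1.le _
      nlinarith
  have hae : 0 ≤ᵐ[volume.restrict (Ioc (0:ℝ) 1)]
      fun x : ℝ => x ^ (α - 1) * (1 - x) ^ (α - 1) - x ^ (α - 1) := by
    have h1 : ∀ᵐ x ∂(volume.restrict (Ioc (0:ℝ) 1)), x ∈ Ioc (0:ℝ) 1 :=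
      ae_restrict_mem measurableSet_Ioc
    have h2' : ∀ᵐ x : ℝ ∂volume, x ≠ 1 := by
      rw [ae_iff]
      simp
    have h2 : ∀ᵐ x ∂(volume.restrict (Ioc (0:ℝ) 1)), x ≠ 1 := ae_restrict_of_ae h2'
    filter_upwards [h1, h2] with x hx hne
    rcases hnonneg x hx with h | h
    · exact h
    · exact absurd h hne
  have hpos : 0 < ∫ x in (1/4 : ℝ)..(1/2 : ℝ),
      (x ^ (α - 1) * (1 - x) ^ (α - 1) - x ^ (α - 1)) := by
    refine intervalIntegral_pos_of_pos_on
      (hdiff.mono_set (by rw [Set.uIcc_of_le (by norm_num : (1/4:ℝ) ≤ 1/2),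
        Set.uIcc_of_le zero_le_one]; intro y hy; exact ⟨by linarith [hy.1], by linarith [hy.2]⟩))
      (fun x hx => ?_) (by norm_num)
    have hx1 : (0:ℝ) < x := by linarith [hx.1]
    have hx2 : x < 1 := by linarith [hx.2]
    have h2 : (1:ℝ) < (1 - x) ^ (α - 1) :=
      (Real.one_lt_rpow_iff_of_pos (by linarith)).2 (Or.inr ⟨by linarith, by linarith⟩)
    have h3 : (0:ℝ) < x ^ (α - 1) := Real.rpow_pos_of_pos hx1 _
    nlinarith
  have hmono : (∫ x in (1/4 : ℝ)..(1/2 : ℝ),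
        (x ^ (α - 1) * (1 - x) ^ (α - 1) - x ^ (α - 1)))
      ≤ ∫ x in (0:ℝ)..1, (x ^ (α - 1) * (1 - x) ^ (α - 1) - x ^ (α - 1)) :=
    intervalIntegral.integral_mono_interval (by norm_num) (by norm_num) (by norm_num) hae hdiff
  have hsub : (∫ x in (0:ℝ)..1, (x ^ (α - 1) * (1 - x) ^ (α - 1) - x ^ (α - 1)))
      = (∫ x in (0:ℝ)..1, x ^ (α - 1) * (1 - x) ^ (α - 1)) - 1 / α := by
    rw [intervalIntegral.integral_sub hint hg, hgval]
  linarith [hpos.trans_le hmono, hsub ▸ (hpos.trans_le hmono)]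

/-- For all `α ∈ (0,1)`, `(1/α)·(1/Γ(2α) − 1/(α·Γ(α)²)) > 0`. -/
theorem stmt_0 (α : ℝ) (hα0 : 0 < α) (hα1 : α < 1) :
    0 < (1 / α) * (1 / Real.Gamma (2 * α) - 1 / (α * (Real.Gamma α) ^ 2)) := by
  have hrepr := beta_real_repr α hα0
  have hI := beta_gt α hα0 hα1
  have hG2 : 0 < Real.Gamma (2 * α) := Real.Gamma_pos_of_pos (by linarith)
  have hG : 0 < Real.Gamma α := Real.Gamma_pos_of_pos hα0
  have hsq : (Real.Gamma α) ^ 2 = Real.Gamma (2 * α)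
      * ∫ x in (0:ℝ)..1, x ^ (α - 1) * (1 - x) ^ (α - 1) := by
    rw [sq]; exact hrepr
  have hIpos : 0 < ∫ x in (0:ℝ)..1, x ^ (α - 1) * (1 - x) ^ (α - 1) :=
    lt_trans (by positivity) hI
  have key : 1 / (α * (Real.Gamma α) ^ 2) < 1 / Real.Gamma (2 * α) := by
    rw [hsq, div_lt_div_iff₀ (by positivity) hG2, one_mul]
    have := (div_lt_iff₀ hα0).mp hI
    nlinarith
  have : 0 < 1 / Real.Gamma (2 * α) - 1 / (α * (Real.Gamma α) ^ 2) := by linarith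
  positivity
end

section
/- Let Λ > 0, Λ̄ > 0 and for n ∈ ℤ define p(n,t) = e^{−(Λ+Λ̄)t} ∑_{m = max(0,−n)}^{∞} Λ^{m+n} Λ̄^m t^{2m+n} / ((m+n)! m!). Then p satisfies, for every n ∈ ℤ and t ≥ 0, the differential equation d/dt p(n,t) = Λ(p(n−1,t) − p(n,t)) − Λ̄(p(n,t) − p(n+1,t)), with p(0,0) = 1 and p(n,0) = 0 for n ≠ 0. -/
noncomputable def sk (Λ Λb : ℝ) (n : ℤ) (m : ℕ) (t : ℝ) : ℝ :=
  if max 0 (-n) ≤ (m : ℤ) then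
    Λ ^ ((m : ℤ) + n).toNat * Λb ^ m * t ^ (m + ((m : ℤ) + n).toNat)
      / ((((m : ℤ) + n).toNat.factorial : ℝ) * (m.factorial : ℝ))
  else 0

noncomputable def sk' (Λ Λb : ℝ) (n : ℤ) (m : ℕ) (t : ℝ) : ℝ :=
  Λ * sk Λ Λb (n - 1) m t
    + Λb * (if m = 0 then 0 else sk Λ Λb (n + 1) (m - 1) t)

lemma sk_hasDerivAt (Λ Λb : ℝ) (n : ℤ) (m : ℕ) (t : ℝ) :
    HasDerivAt (fun x => sk Λ Λb n m x) (sk' Λ Λb n m t) t := by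
  by_cases hc : max 0 (-n) ≤ (m : ℤ)
  · set k := ((m : ℤ) + n).toNat with hkdef
    clear_value k
    have hk : (k : ℤ) = (m : ℤ) + n := by omega
    have h1 : (fun x => sk Λ Λb n m x)
        = fun x => (Λ ^ k * Λb ^ m / ((k.factorial : ℝ) * (m.factorial : ℝ))) * x ^ (m + k) := by
      funext x
      simp only [sk, ← hkdef]
      rw [if_pos hc]
      ring
    rw [h1]
    have h2 := (hasDerivAt_pow (m + k) t).const_mul
      (Λ ^ k * Λb ^ m / ((k.factorial : ℝ) * (m.factorial : ℝ)))
    refine h2.congr_deriv ?_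
    have hkfac : (0:ℝ) < k.factorial := by positivity
    have hmfac : (0:ℝ) < m.factorial := by positivity
    rw [sk']
    have hL : Λ * sk Λ Λb (n - 1) m t
        = (Λ ^ k * Λb ^ m / ((k.factorial : ℝ) * (m.factorial : ℝ))) * ((k : ℝ) * t ^ (m + k - 1)) := by
      rcases Nat.eq_zero_or_pos k with hk0 | hk1
      · have hc' : ¬ max 0 (-(n - 1)) ≤ (m : ℤ) := by omega
        have h3 : sk Λ Λb (n - 1) m t = 0 := by
          simp only [sk]; rw [if_neg hc']
        rw [h3, hk0]
        simp
      · have hc' : max 0 (-(n - 1)) ≤ (m : ℤ) := by omega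
        have hk2 : ((m : ℤ) + (n - 1)).toNat = k - 1 := by omega
        have h3 : sk Λ Λb (n - 1) m t
            = Λ ^ (k-1) * Λb ^ m * t ^ (m + (k-1)) / (((k-1).factorial : ℝ) * (m.factorial : ℝ)) := by
          simp only [sk]; rw [if_pos hc', hk2]
        rw [h3]
        obtain ⟨k', rfl⟩ : ∃ k', k = k' + 1 := ⟨k - 1, by omega⟩
        simp only [Nat.add_sub_cancel, Nat.factorial_succ]
        rw [show m + (k' + 1) - 1 = m + k' by omega]
        have hfac' : (0:ℝ) < k'.factorial := by positivity
        push_cast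
        field_simp
        ring
    have hR : Λb * (if m = 0 then 0 else sk Λ Λb (n + 1) (m - 1) t)
        = (Λ ^ k * Λb ^ m / ((k.factorial : ℝ) * (m.factorial : ℝ))) * ((m : ℝ) * t ^ (m + k - 1)) := by
      rcases Nat.eq_zero_or_pos m with hm0 | hm1
      · subst hm0; simp
      · obtain ⟨m', rfl⟩ : ∃ m', m = m' + 1 := ⟨m - 1, by omega⟩
        have hc' : max 0 (-(n + 1)) ≤ (m' : ℤ) := by
          push_cast at hc ⊢; omega
        have hk3 : ((m' : ℤ) + (n + 1)).toNat = k := by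
          push_cast at hk ⊢; omega
        have h3 : sk Λ Λb (n + 1) (m' + 1 - 1) t
            = Λ ^ k * Λb ^ m' * t ^ (m' + k) / ((k.factorial : ℝ) * (m'.factorial : ℝ)) := by
          simp only [Nat.add_sub_cancel, sk]; rw [if_pos hc', hk3]
        rw [if_neg (Nat.succ_ne_zero m'), h3]
        have he : m' + 1 + k - 1 = m' + k := by omega
        rw [he]
        simp only [Nat.factorial_succ]
        have hfac' : (0:ℝ) < m'.factorial := by positivity
        push_cast
        field_simp
        ring
    rw [hL, hR]
    have hcast : ((m + k : ℕ) : ℝ) = (m : ℝ) + (k : ℝ) := by push_cast; ring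
    rw [hcast]
    ring
  · have h1 : (fun x => sk Λ Λb n m x) = fun _ => (0:ℝ) := by
      funext x; simp only [sk]; rw [if_neg hc]
    have hmn : (m : ℤ) < -n := by omega
    have hv : sk' Λ Λb n m t = 0 := by
      have hc1 : ¬ max 0 (-(n - 1)) ≤ (m : ℤ) := by omega
      have h3 : sk Λ Λb (n - 1) m t = 0 := by
        simp only [sk]; rw [if_neg hc1]
      have h2 : (if m = 0 then (0:ℝ) else sk Λ Λb (n + 1) (m - 1) t) = 0 := by
        rcases Nat.eq_zero_or_pos m with hm0 | hm1
        · simp [hm0]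
        · obtain ⟨m', rfl⟩ : ∃ m', m = m' + 1 := ⟨m - 1, by omega⟩
          have hc2 : ¬ max 0 (-(n + 1)) ≤ (m' : ℤ) := by
            push_cast at hmn ⊢; omega
          have h4 : sk Λ Λb (n + 1) (m' + 1 - 1) t = 0 := by
            simp only [Nat.add_sub_cancel, sk]; rw [if_neg hc2]
          rw [if_neg (Nat.succ_ne_zero m'), h4]
      rw [sk', h3, h2]
      ring
    rw [h1, hv]
    exact hasDerivAt_const t 0

lemma bound_summable (D : ℝ) (c : ℕ) :
    Summable (fun m : ℕ => D ^ (c + 2 * m) / (m.factorial : ℝ)) := by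
  have h := (Real.summable_pow_div_factorial (D ^ 2)).mul_left (D ^ c)
  refine h.congr fun m => ?_
  rw [pow_add, pow_mul, mul_div_assoc]

lemma sk_abs_le (Λ Λb : ℝ) (hΛ : 0 < Λ) (hΛb : 0 < Λb) (R : ℝ) (n : ℤ) (m : ℕ)
    (x : ℝ) (hx : |x| ≤ R) :
    |sk Λ Λb n m x| ≤ (max (Λ * R) (max (Λb * R) 1)) ^ (n.toNat + 2 * m) / (m.factorial : ℝ) := by
  have hR : 0 ≤ R := le_trans (abs_nonneg x) hx
  set D := max (Λ * R) (max (Λb * R) 1) with hDdef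
  have hD1 : 1 ≤ D := le_trans (le_max_right _ _) (le_max_right _ _)
  have hD0 : 0 ≤ D := le_trans zero_le_one hD1
  by_cases hc : max 0 (-n) ≤ (m : ℤ)
  · set k := ((m : ℤ) + n).toNat with hkdef
    clear_value k
    have hk : (k : ℤ) = (m : ℤ) + n := by omega
    have hkle : k ≤ n.toNat + m := by omega
    have h1 : sk Λ Λb n m x
        = Λ ^ k * Λb ^ m * x ^ (m + k) / ((k.factorial : ℝ) * (m.factorial : ℝ)) := by
      simp only [sk, ← hkdef]; rw [if_pos hc]
    rw [h1, abs_div, abs_mul, abs_mul, abs_pow, abs_pow, abs_pow,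
      abs_of_nonneg hΛ.le, abs_of_nonneg hΛb.le,
      abs_of_nonneg (by positivity : (0:ℝ) ≤ (k.factorial : ℝ) * (m.factorial : ℝ))]
    have hnum : Λ ^ k * Λb ^ m * |x| ^ (m + k) ≤ D ^ (n.toNat + 2 * m) :=
      calc Λ ^ k * Λb ^ m * |x| ^ (m + k)
          ≤ Λ ^ k * Λb ^ m * R ^ (m + k) := by
            gcongr
        _ = (Λ * R) ^ k * (Λb * R) ^ m := by
            rw [mul_pow, mul_pow, pow_add]; ring
        _ ≤ D ^ k * D ^ m := by
            gcongr
            · exact le_max_left _ _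
            · exact le_trans (le_max_left _ _) (le_max_right _ _)
        _ ≤ D ^ (n.toNat + m) * D ^ m := by
            gcongr
        _ = D ^ (n.toNat + 2 * m) := by
            rw [← pow_add]; congr 1; omega
    have hden : (m.factorial : ℝ) ≤ (k.factorial : ℝ) * (m.factorial : ℝ) := by
      refine le_mul_of_one_le_left (by positivity) ?_
      exact_mod_cast Nat.one_le_iff_ne_zero.mpr k.factorial_ne_zero
    exact div_le_div₀ (by positivity) hnum (by positivity) hden
  · have h1 : sk Λ Λb n m x = 0 := by simp only [sk]; rw [if_neg hc]
    rw [h1, abs_zero]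
    positivity

lemma sk_summable (Λ Λb : ℝ) (hΛ : 0 < Λ) (hΛb : 0 < Λb) (n : ℤ) (t : ℝ) :
    Summable (fun m => sk Λ Λb n m t) := by
  refine Summable.of_abs ?_
  refine Summable.of_nonneg_of_le (fun m => abs_nonneg _)
    (fun m => sk_abs_le Λ Λb hΛ hΛb |t| n m t le_rfl) ?_
  exact bound_summable _ _
lemma shift_summable (F : ℕ → ℝ) (hF : Summable F) :
    Summable (fun m : ℕ => if m = 0 then (0:ℝ) else F (m - 1)) := by
  set g : ℕ → ℝ := fun m => if m = 0 then (0:ℝ) else F (m - 1) with hg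
  have h0 : ∀ x ∉ Set.range Nat.succ, g x = 0 := by
    intro x hx
    have : x = 0 := by
      cases x with
      | zero => rfl
      | succ y => exact absurd ⟨y, rfl⟩ hx
    simp [hg, this]
  have hcomp : (g ∘ Nat.succ) = F := by
    funext m; simp [hg]
  rw [← (Nat.succ_injective.summable_iff h0), hcomp]
  exact hF

lemma shift_tsum (F : ℕ → ℝ) :
    ∑' m : ℕ, (if m = 0 then (0:ℝ) else F (m - 1)) = ∑' m, F m := by
  set g : ℕ → ℝ := fun m => if m = 0 then (0:ℝ) else F (m - 1) with hg
  have h0 : Function.support g ⊆ Set.range Nat.succ := by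
    intro x hx
    cases x with
    | zero => exact absurd (by simp [hg]) hx
    | succ y => exact ⟨y, rfl⟩
  have := Nat.succ_injective.tsum_eq h0
  rw [← this]
  refine tsum_congr fun m => ?_
  simp [hg]

set_option maxHeartbeats 2000000 in
lemma tsum_sk' (Λ Λb : ℝ) (hΛ : 0 < Λ) (hΛb : 0 < Λb) (n : ℤ) (t : ℝ) :
    ∑' m, sk' Λ Λb n m t
      = Λ * ∑' m, sk Λ Λb (n - 1) m t + Λb * ∑' m, sk Λ Λb (n + 1) m t := by
  have hs1 : Summable (fun m => Λ * sk Λ Λb (n - 1) m t) :=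
    (sk_summable Λ Λb hΛ hΛb (n - 1) t).mul_left Λ
  have hs2 : Summable (fun m : ℕ => if m = 0 then (0:ℝ) else sk Λ Λb (n + 1) (m - 1) t) :=
    shift_summable _ (sk_summable Λ Λb hΛ hΛb (n + 1) t)
  have hs2' : Summable (fun m : ℕ =>
      Λb * if m = 0 then (0:ℝ) else sk Λ Λb (n + 1) (m - 1) t) := hs2.mul_left Λb
  simp only [sk']
  rw [Summable.tsum_add hs1 hs2']
  rw [tsum_mul_left]
  rw [tsum_mul_left]
  rw [shift_tsum (fun m => sk Λ Λb (n + 1) m t)]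

lemma S_hasDerivAt (Λ Λb : ℝ) (hΛ : 0 < Λ) (hΛb : 0 < Λb) (n : ℤ) (t : ℝ) :
    HasDerivAt (fun x => ∑' m, sk Λ Λb n m x) (∑' m, sk' Λ Λb n m t) t := by
  set R : ℝ := |t| + 1 with hR
  set D : ℝ := max (Λ * R) (max (Λb * R) 1) with hD
  set u : ℕ → ℝ := fun m =>
    Λ * (D ^ ((n - 1).toNat + 2 * m) / (m.factorial : ℝ))
      + Λb * (if m = 0 then (0:ℝ)
          else D ^ ((n + 1).toNat + 2 * (m - 1)) / ((m - 1).factorial : ℝ)) with hu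
  have hus : Summable u := by
    refine Summable.add ((bound_summable D _).mul_left Λ) ?_
    exact ((shift_summable _ (bound_summable D ((n+1).toNat))).mul_left Λb)
  refine hasDerivAt_tsum_of_isPreconnected hus (isOpen_Ioo (a := -R) (b := R))
    (isPreconnected_Ioo) (fun m y _ => sk_hasDerivAt Λ Λb n m y) ?_ ?_
    (sk_summable Λ Λb hΛ hΛb n t) ?_
  · intro m y hy
    have hyR : |y| ≤ R := by
      rw [abs_le]; constructor <;> [linarith [hy.1]; linarith [hy.2]]
    rw [Real.norm_eq_abs, sk']
    refine le_trans (abs_add_le _ _) ?_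
    rw [hu]
    refine add_le_add ?_ ?_
    · rw [abs_mul, abs_of_nonneg hΛ.le]
      gcongr
      exact sk_abs_le Λ Λb hΛ hΛb R (n - 1) m y hyR
    · rw [abs_mul, abs_of_nonneg hΛb.le]
      gcongr
      rcases Nat.eq_zero_or_pos m with hm0 | hm1
      · simp [hm0]
      · rw [if_neg (by omega), if_neg (by omega)]
        exact sk_abs_le Λ Λb hΛ hΛb R (n + 1) (m - 1) y hyR
  · constructor <;> [nlinarith [abs_nonneg t, neg_abs_le t]; nlinarith [le_abs_self t]]
  · constructor <;> [nlinarith [abs_nonneg t, neg_abs_le t]; nlinarith [le_abs_self t]]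

/-- The generalized Skellam pmf
`p(n,t) = e^{−(Λ+Λ̄)t} ∑_{m ≥ max(0,−n)} Λ^{m+n} Λ̄^m t^{2m+n}/((m+n)! m!)`
satisfies `d/dt p(n,t) = Λ(p(n−1,t) − p(n,t)) − Λ̄(p(n,t) − p(n+1,t))`,
with `p(0,0) = 1` and `p(n,0) = 0` for `n ≠ 0`. -/
theorem stmt_4 (Λ Λb : ℝ) (hΛ : 0 < Λ) (hΛb : 0 < Λb) (p : ℤ → ℝ → ℝ)
    (hp : ∀ n : ℤ, ∀ t : ℝ,
      p n t = Real.exp (-(Λ + Λb) * t)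
        * ∑' m : ℕ, if max 0 (-n) ≤ (m : ℤ) then
            Λ ^ ((m : ℤ) + n).toNat * Λb ^ m * t ^ (m + ((m : ℤ) + n).toNat)
              / ((((m : ℤ) + n).toNat.factorial : ℝ) * (m.factorial : ℝ))
          else 0) :
    (∀ n : ℤ, ∀ t : ℝ, 0 ≤ t →
        HasDerivAt (p n)
          (Λ * (p (n - 1) t - p n t) - Λb * (p n t - p (n + 1) t)) t)
      ∧ p 0 0 = 1 ∧ ∀ n : ℤ, n ≠ 0 → p n 0 = 0 := by
  have hp' : ∀ n : ℤ, ∀ t : ℝ,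
      p n t = Real.exp (-(Λ + Λb) * t) * ∑' m : ℕ, sk Λ Λb n m t := hp
  refine ⟨?_, ?_, ?_⟩
  · intro n t _
    have hpfun : p n = fun x => Real.exp (-(Λ + Λb) * x) * ∑' m : ℕ, sk Λ Λb n m x :=
      funext fun x => hp' n x
    rw [hpfun]
    have hexp : HasDerivAt (fun x : ℝ => Real.exp (-(Λ + Λb) * x))
        (Real.exp (-(Λ + Λb) * t) * (-(Λ + Λb) * 1)) t :=
      ((hasDerivAt_id t).const_mul (-(Λ + Λb))).exp
    have hmul := hexp.mul (S_hasDerivAt Λ Λb hΛ hΛb n t)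
    refine hmul.congr_deriv ?_
    rw [tsum_sk' Λ Λb hΛ hΛb n t]
    simp only [hp']
    ring
  · rw [hp' 0 0]
    have h1 : ∀ m : ℕ, sk Λ Λb 0 m 0 = if m = 0 then 1 else 0 := by
      intro m
      have hc : max 0 (-(0:ℤ)) ≤ (m : ℤ) := by simp
      have hk : ((m : ℤ) + 0).toNat = m := by omega
      simp only [sk]
      rw [if_pos hc, hk]
      cases m with
      | zero => norm_num
      | succ m' =>
        rw [zero_pow (by omega)]
        simp
    rw [tsum_congr h1, tsum_ite_eq]
    simp
  · intro n hn
    rw [hp' n 0]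
    have h1 : ∀ m : ℕ, sk Λ Λb n m 0 = 0 := by
      intro m
      by_cases hc : max 0 (-n) ≤ (m : ℤ)
      · have hk : m + ((m : ℤ) + n).toNat ≠ 0 := by
          intro h
          have hm : m = 0 := by omega
          have : ((m : ℤ) + n).toNat = 0 := by omega
          omega
        simp only [sk]
        rw [if_pos hc, zero_pow hk]
        ring
      · simp only [sk]; rw [if_neg hc]
    rw [tsum_congr h1, tsum_zero, mul_zero]
end

section
/- Let α ∈ (0,1] and c ∈ ℝ, and define w(t) = E_{α,1}(c t^α) = ∑_{j=0}^∞ c^j t^{jα}/Γ(jα+1). Then w satisfies the eigenfunction property for the Caputo derivative: (1/Γ(1−α)) ∫_0^t (t−s)^{−α} w′(s) ds = c·w(t) for all t > 0 (for α = 1, w′(t) = c·w(t)), with w(0) = 1. -/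
open MeasureTheory Set intervalIntegral

lemma ml_gamma_lb {B y : ℝ} (hB : 0 < B) (hy : 0 ≤ y) :
    B ^ y * Real.exp (-(B + 1)) ≤ Real.Gamma (y + 1) := by
  have h1 : (0:ℝ) < y + 1 := by linarith
  rw [Real.Gamma_eq_integral h1]
  have hsub : Ioc B (B+1) ⊆ Ioi (0:ℝ) := fun x hx => lt_trans hB hx.1
  have hint : IntegrableOn (fun x => Real.exp (-x) * x ^ (y + 1 - 1)) (Ioc B (B+1)) :=
    (Real.GammaIntegral_convergent h1).mono_set hsub
  have key : B ^ y * Real.exp (-(B + 1)) ≤ ∫ x in Ioc B (B+1), Real.exp (-x) * x ^ (y+1-1) := by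
    have : ∫ x in Ioc B (B+1), (Real.exp (-(B+1)) * B ^ y)
        ≤ ∫ x in Ioc B (B+1), Real.exp (-x) * x ^ (y+1-1) := by
      refine setIntegral_mono_on (integrableOn_const measure_Ioc_lt_top.ne) hint
        measurableSet_Ioc ?_
      intro x hx
      have hx0 : (0:ℝ) < x := lt_trans hB hx.1
      have : Real.exp (-(B+1)) ≤ Real.exp (-x) := Real.exp_le_exp.2 (by linarith [hx.2])
      have h2 : B ^ y ≤ x ^ (y+1-1) := by
        simpa using Real.rpow_le_rpow hB.le hx.1.le hy
      exact mul_le_mul this h2 (Real.rpow_nonneg hB.le y) (Real.exp_pos _).le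
    rw [setIntegral_const] at this
    rw [measureReal_def, Real.volume_Ioc] at this
    simp only [add_sub_cancel_left, ENNReal.toReal_ofReal (zero_le_one (α := ℝ)), one_smul] at this
    linarith [this]
  refine key.trans ?_
  refine setIntegral_mono_set (Real.GammaIntegral_convergent h1) ?_ (HasSubset.Subset.eventuallyLE hsub)
  filter_upwards [self_mem_ae_restrict measurableSet_Ioi] with x hx
  exact mul_nonneg (Real.exp_pos _).le (Real.rpow_nonneg (le_of_lt hx) _)

lemma ml_summable_master {α : ℝ} (hα : 0 < α) {K : ℝ} (hK : 0 ≤ K) :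
    Summable (fun j : ℕ => ((j : ℝ) + 1) * K ^ j / Real.Gamma ((j : ℝ) * α + 1)) := by
  set B : ℝ := (2 * K + 2) ^ (1 / α) with hBdef
  have hP : (0:ℝ) < 2 * K + 2 := by linarith
  have hB : 0 < B := Real.rpow_pos_of_pos hP _
  have hBα : B ^ α = 2 * K + 2 := by
    rw [hBdef, ← Real.rpow_mul hP.le, one_div_mul_cancel hα.ne', Real.rpow_one]
  set q : ℝ := K / (2 * K + 2) with hq
  have hq1 : q < 1 := by
    rw [hq, div_lt_one hP]; linarith
  have hq0 : 0 ≤ q := div_nonneg hK hP.le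
  have hu : Summable (fun j : ℕ => Real.exp (B + 1) * (((j:ℝ) + 1) * q ^ j)) := by
    apply Summable.mul_left
    have h1 : Summable (fun j : ℕ => (j:ℝ) * q ^ j) := by
      simpa using summable_pow_mul_geometric_of_norm_lt_one 1
        (r := q) (by rwa [Real.norm_of_nonneg hq0])
    have h2 : Summable (fun j : ℕ => q ^ j) := summable_geometric_of_lt_one hq0 hq1
    simpa [add_mul] using h1.add h2
  refine Summable.of_nonneg_of_le (fun j => ?_) (fun j => ?_) hu
  · have := Real.Gamma_pos_of_pos (show (0:ℝ) < (j:ℝ) * α + 1 by positivity)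
    positivity
  · have hy : (0:ℝ) ≤ (j:ℝ) * α := by positivity
    have hlb := ml_gamma_lb hB hy
    have hBj : B ^ ((j:ℝ) * α) = (2*K+2) ^ j := by
      rw [mul_comm (j:ℝ) α, Real.rpow_mul hB.le, hBα, Real.rpow_natCast]
    rw [hBj] at hlb
    have hΓpos : 0 < Real.Gamma ((j:ℝ) * α + 1) := Real.Gamma_pos_of_pos (by positivity)
    have hden : 0 < (2*K+2) ^ j * Real.exp (-(B + 1)) := by positivity
    calc ((j : ℝ) + 1) * K ^ j / Real.Gamma ((j : ℝ) * α + 1)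
        ≤ ((j : ℝ) + 1) * K ^ j / ((2*K+2) ^ j * Real.exp (-(B + 1))) := by
          apply div_le_div_of_nonneg_left _ hden hlb
          positivity
      _ = Real.exp (B + 1) * (((j:ℝ) + 1) * q ^ j) := by
          rw [Real.exp_neg, hq, div_pow]
          field_simp

lemma ml_summable {α : ℝ} (hα : 0 < α) {K : ℝ} (hK : 0 ≤ K) :
    Summable (fun j : ℕ => K ^ j / Real.Gamma ((j : ℝ) * α + 1)) := by
  refine Summable.of_nonneg_of_le (fun j => ?_) (fun j => ?_) (ml_summable_master hα hK)
  · have := Real.Gamma_pos_of_pos (show (0:ℝ) < (j:ℝ) * α + 1 by positivity)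
    positivity
  · have hΓ := Real.Gamma_pos_of_pos (show (0:ℝ) < (j:ℝ) * α + 1 by positivity)
    gcongr
    nlinarith [pow_nonneg hK j, Nat.cast_nonneg (α := ℝ) j]

lemma ml_summable_j {α : ℝ} (hα : 0 < α) {K : ℝ} (hK : 0 ≤ K) :
    Summable (fun j : ℕ => (j : ℝ) * K ^ j / Real.Gamma ((j : ℝ) * α + 1)) := by
  refine Summable.of_nonneg_of_le (fun j => ?_) (fun j => ?_) (ml_summable_master hα hK)
  · have := Real.Gamma_pos_of_pos (show (0:ℝ) < (j:ℝ) * α + 1 by positivity)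
    positivity
  · have hΓ := Real.Gamma_pos_of_pos (show (0:ℝ) < (j:ℝ) * α + 1 by positivity)
    gcongr
    nlinarith [pow_nonneg hK j, Nat.cast_nonneg (α := ℝ) j]

lemma ml_hasDerivAt {α : ℝ} (c : ℝ) (hα : 0 < α) {x : ℝ} (hx : 0 < x) :
    HasDerivAt (fun s : ℝ => ∑' j : ℕ, c ^ j * s ^ ((j : ℝ) * α) / Real.Gamma ((j : ℝ) * α + 1))
      (∑' j : ℕ, c ^ j * (((j : ℝ) * α) * x ^ ((j : ℝ) * α - 1)) / Real.Gamma ((j : ℝ) * α + 1))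
      x := by
  set a : ℝ := x / 2 with ha
  set b : ℝ := x + 1 with hb
  have ha0 : 0 < a := by positivity
  have hb0 : 0 < b := by positivity
  have hab : a < b := by rw [ha, hb]; linarith
  set u : ℕ → ℝ := fun j => |c| ^ j * (((j : ℝ) * α) *
      (a ^ ((j : ℝ) * α - 1) + b ^ ((j : ℝ) * α - 1))) / Real.Gamma ((j : ℝ) * α + 1) with hu
  have hu_sum : Summable u := by
    have h1 : Summable (fun j : ℕ => (α / a) *
        ((j : ℝ) * (|c| * a ^ α) ^ j / Real.Gamma ((j : ℝ) * α + 1))) :=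
      (ml_summable_j hα (by positivity)).mul_left _
    have h2 : Summable (fun j : ℕ => (α / b) *
        ((j : ℝ) * (|c| * b ^ α) ^ j / Real.Gamma ((j : ℝ) * α + 1))) :=
      (ml_summable_j hα (by positivity)).mul_left _
    have key : ∀ (y : ℝ), 0 < y → ∀ j : ℕ,
        |c| ^ j * y ^ ((j:ℝ) * α - 1) = (|c| * y ^ α) ^ j / y := by
      intro y hy j
      rw [mul_pow, ← Real.rpow_natCast (y ^ α) j, ← Real.rpow_mul hy.le,
        Real.rpow_sub hy, Real.rpow_one, mul_comm α (j:ℝ), mul_div_assoc]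
    have : u = fun j : ℕ => (α / a) *
        ((j : ℝ) * (|c| * a ^ α) ^ j / Real.Gamma ((j : ℝ) * α + 1)) + (α / b) *
        ((j : ℝ) * (|c| * b ^ α) ^ j / Real.Gamma ((j : ℝ) * α + 1)) := by
      funext j
      simp only [hu]
      have k1 : (|c| * a ^ α) ^ j = |c| ^ j * a ^ ((j:ℝ) * α - 1) * a := by
        rw [key a ha0 j]; field_simp
      have k2 : (|c| * b ^ α) ^ j = |c| ^ j * b ^ ((j:ℝ) * α - 1) * b := by
        rw [key b hb0 j]; field_simp
      rw [k1, k2]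
      field_simp
    rw [this]; exact h1.add h2
  have hmem : x ∈ Ioo a b := ⟨by rw [ha]; linarith, by rw [hb]; linarith⟩
  refine hasDerivAt_tsum_of_isPreconnected
    (g := fun (j : ℕ) (s : ℝ) => c ^ j * s ^ ((j : ℝ) * α) / Real.Gamma ((j : ℝ) * α + 1))
    (g' := fun (j : ℕ) (y : ℝ) => c ^ j * (((j : ℝ) * α) * y ^ ((j : ℝ) * α - 1)) /
      Real.Gamma ((j : ℝ) * α + 1)) hu_sum isOpen_Ioo (isPreconnected_Ioo)
    (fun j y hy => ?_) (fun j y hy => ?_) hmem ?_ hmem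
  · have hy0 : y ≠ 0 := ne_of_gt (lt_trans ha0 hy.1)
    exact ((Real.hasDerivAt_rpow_const (Or.inl hy0)).const_mul (c ^ j)).div_const _
  · have hy0 : 0 < y := lt_trans ha0 hy.1
    have hΓ : 0 < Real.Gamma ((j:ℝ) * α + 1) :=
      Real.Gamma_pos_of_pos (by positivity)
    rw [Real.norm_eq_abs, abs_div, abs_of_pos hΓ, abs_mul, abs_pow, abs_of_nonneg
      (by positivity : (0:ℝ) ≤ (j:ℝ) * α * y ^ ((j:ℝ) * α - 1))]
    have hyb : y ^ ((j:ℝ) * α - 1) ≤ a ^ ((j:ℝ) * α - 1) + b ^ ((j:ℝ) * α - 1) := by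
      rcases le_or_gt 0 ((j:ℝ) * α - 1) with he | he
      · have : y ^ ((j:ℝ) * α - 1) ≤ b ^ ((j:ℝ) * α - 1) :=
          Real.rpow_le_rpow hy0.le hy.2.le he
        have h0 : 0 ≤ a ^ ((j:ℝ) * α - 1) := Real.rpow_nonneg ha0.le _
        linarith
      · have : y ^ ((j:ℝ) * α - 1) ≤ a ^ ((j:ℝ) * α - 1) :=
          Real.rpow_le_rpow_of_nonpos ha0 hy.1.le he.le
        have h0 : 0 ≤ b ^ ((j:ℝ) * α - 1) := Real.rpow_nonneg hb0.le _
        linarith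
    simp only [hu]
    gcongr
  · -- summability at x
    refine Summable.of_norm ?_
    have heq : ∀ j : ℕ, ‖c ^ j * x ^ ((j:ℝ) * α) / Real.Gamma ((j:ℝ) * α + 1)‖
        = (|c| * x ^ α) ^ j / Real.Gamma ((j:ℝ) * α + 1) := by
      intro j
      have hΓ : 0 < Real.Gamma ((j:ℝ) * α + 1) := Real.Gamma_pos_of_pos (by positivity)
      rw [Real.norm_eq_abs, abs_div, abs_of_pos hΓ, abs_mul, abs_pow,
        abs_of_nonneg (Real.rpow_nonneg hx.le _), mul_pow,
        ← Real.rpow_natCast (x ^ α) j, ← Real.rpow_mul hx.le, mul_comm α (j:ℝ)]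
    simp only [heq]
    exact ml_summable hα (by positivity)

lemma ml_beta {u v t : ℝ} (hu : 0 < u) (hv : 0 < v) (ht : 0 < t) :
    ∫ s in (0:ℝ)..t, s ^ (u - 1) * (t - s) ^ (v - 1)
      = Real.Gamma u * Real.Gamma v / Real.Gamma (u + v) * t ^ (u + v - 1) := by
  have h1 : ((∫ s in (0:ℝ)..t, s ^ (u - 1) * (t - s) ^ (v - 1) : ℝ) : ℂ)
      = ∫ s in (0:ℝ)..t, ((s : ℂ) ^ ((u : ℂ) - 1) * ((t : ℂ) - s) ^ ((v : ℂ) - 1)) := by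
    rw [← intervalIntegral.integral_ofReal]
    refine intervalIntegral.integral_congr fun s hs => ?_
    rw [uIcc_of_le ht.le] at hs
    have hs0 : 0 ≤ s := hs.1
    have hts : 0 ≤ t - s := sub_nonneg.2 hs.2
    push_cast
    rw [Complex.ofReal_cpow hs0, Complex.ofReal_cpow hts]
    push_cast
    ring
  rw [Complex.betaIntegral_scaled (u : ℂ) (v : ℂ) ht] at h1
  have hG : Complex.Gamma (u : ℂ) * Complex.Gamma (v : ℂ)
      = Complex.Gamma ((u : ℂ) + v) * Complex.betaIntegral u v :=
    Complex.Gamma_mul_Gamma_eq_betaIntegral (by simpa using hu) (by simpa using hv)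
  have hGuv : Complex.Gamma ((u : ℂ) + v) ≠ 0 := by
    rw [show ((u : ℂ) + v) = ((u + v : ℝ) : ℂ) by push_cast; ring, Complex.Gamma_ofReal]
    exact_mod_cast (Real.Gamma_pos_of_pos (by linarith)).ne'
  have hbeta : Complex.betaIntegral u v
      = Complex.Gamma (u : ℂ) * Complex.Gamma (v : ℂ) / Complex.Gamma ((u : ℂ) + v) := by
    rw [hG, mul_comm, mul_div_assoc, div_self hGuv, mul_one]
  rw [hbeta] at h1
  apply Complex.ofReal_injective
  rw [h1]
  have hcast : ((t : ℂ)) ^ ((u : ℂ) + v - 1) = ((t ^ (u + v - 1) : ℝ) : ℂ) := by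
    rw [Complex.ofReal_cpow ht.le]
    push_cast
    ring_nf
  rw [hcast]
  rw [show Complex.Gamma (u:ℂ) = ((Real.Gamma u : ℝ) : ℂ) from (Complex.Gamma_ofReal u),
    show Complex.Gamma (v:ℂ) = ((Real.Gamma v : ℝ) : ℂ) from (Complex.Gamma_ofReal v),
    show Complex.Gamma ((u:ℂ) + v) = ((Real.Gamma (u + v) : ℝ) : ℂ) by
      rw [show ((u : ℂ) + v) = ((u + v : ℝ) : ℂ) by push_cast; ring, Complex.Gamma_ofReal]]
  push_cast
  ring

lemma ml_intble_left {p q t : ℝ} (hp : -1 < p) (ht : 0 < t) :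
    IntervalIntegrable (fun s => s ^ p * (t - s) ^ q) volume 0 (t / 2) := by
  apply IntervalIntegrable.mul_continuousOn (intervalIntegrable_rpow' hp)
  apply continuousOn_of_forall_continuousAt
  intro s hs
  rw [uIcc_of_le (by linarith : (0:ℝ) ≤ t / 2)] at hs
  have : t - s ≠ 0 := by
    have := hs.2; intro h; rw [sub_eq_zero] at h; subst h; linarith
  exact ContinuousAt.rpow_const ((continuous_const.sub continuous_id).continuousAt)
    (Or.inl this)

lemma ml_intble {p q t : ℝ} (hp : -1 < p) (hq : -1 < q) (ht : 0 < t) :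
    IntervalIntegrable (fun s => s ^ p * (t - s) ^ q) volume 0 t := by
  refine (ml_intble_left hp ht).trans ?_
  have h1 : IntervalIntegrable (fun s => s ^ q * (t - s) ^ p) volume 0 (t / 2) :=
    ml_intble_left hq ht
  have h2 := h1.comp_sub_left t
  have e1 : t - 0 = t := by ring
  have e2 : t - t / 2 = t / 2 := by ring
  rw [e1, e2] at h2
  have h3 : (fun s => (t - s) ^ q * (t - (t - s)) ^ p) = fun s : ℝ => s ^ p * (t - s) ^ q := by
    funext s; rw [sub_sub_cancel]; ring
  rw [h3] at h2
  exact h2.symm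

lemma ml_norm_term {α : ℝ} (c : ℝ) (hα : 0 < α) {x : ℝ} (hx : 0 < x) (j : ℕ) :
    ‖c ^ j * x ^ ((j : ℝ) * α) / Real.Gamma ((j : ℝ) * α + 1)‖
      = (|c| * x ^ α) ^ j / Real.Gamma ((j : ℝ) * α + 1) := by
  have hΓ : 0 < Real.Gamma ((j:ℝ) * α + 1) := Real.Gamma_pos_of_pos (by positivity)
  rw [Real.norm_eq_abs, abs_div, abs_of_pos hΓ, abs_mul, abs_pow,
    abs_of_nonneg (Real.rpow_nonneg hx.le _), mul_pow,
    ← Real.rpow_natCast (x ^ α) j, ← Real.rpow_mul hx.le, mul_comm α (j:ℝ)]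

lemma ml_term_summable {α : ℝ} (c : ℝ) (hα : 0 < α) {x : ℝ} (hx : 0 < x) :
    Summable (fun j : ℕ => c ^ j * x ^ ((j : ℝ) * α) / Real.Gamma ((j : ℝ) * α + 1)) := by
  refine Summable.of_norm ?_
  simp only [ml_norm_term c hα hx]
  exact ml_summable hα (by positivity)

lemma ml_deriv_summable {α : ℝ} (c : ℝ) (hα : 0 < α) {x : ℝ} (hx : 0 < x) :
    Summable (fun j : ℕ =>
      c ^ j * (((j : ℝ) * α) * x ^ ((j : ℝ) * α - 1)) / Real.Gamma ((j : ℝ) * α + 1)) := by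
  refine Summable.of_norm ?_
  have heq : ∀ j : ℕ, ‖c ^ j * (((j : ℝ) * α) * x ^ ((j : ℝ) * α - 1)) /
      Real.Gamma ((j : ℝ) * α + 1)‖
      = (α / x) * ((j : ℝ) * (|c| * x ^ α) ^ j / Real.Gamma ((j : ℝ) * α + 1)) := by
    intro j
    have hΓ : 0 < Real.Gamma ((j:ℝ) * α + 1) := Real.Gamma_pos_of_pos (by positivity)
    have key : |c| ^ j * x ^ ((j:ℝ) * α - 1) = (|c| * x ^ α) ^ j / x := by
      rw [mul_pow, ← Real.rpow_natCast (x ^ α) j, ← Real.rpow_mul hx.le,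
        Real.rpow_sub hx, Real.rpow_one, mul_comm α (j:ℝ), mul_div_assoc]
    rw [Real.norm_eq_abs, abs_div, abs_of_pos hΓ, abs_mul, abs_pow, abs_of_nonneg
      (by positivity : (0:ℝ) ≤ (j:ℝ) * α * x ^ ((j:ℝ) * α - 1))]
    rw [show |c| ^ j * ((j:ℝ) * α * x ^ ((j:ℝ)*α - 1)) =
        (j:ℝ) * α * (|c| ^ j * x ^ ((j:ℝ)*α - 1)) by ring, key]
    field_simp
  simp only [heq]
  exact ((ml_summable_j hα (by positivity)).mul_left _)



/-- The Mittag-Leffler function `w(t) = E_{α,1}(c t^α)` is an eigenfunction of the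
Caputo fractional derivative: for `α ∈ (0,1)`,
`(1/Γ(1−α)) ∫_0^t (t−s)^{−α} w′(s) ds = c·w(t)` for `t > 0`; for `α = 1`,
`w′(t) = c·w(t)`; and `w(0) = 1`. -/
theorem stmt_18 (α c : ℝ) (hα0 : 0 < α) (hα1 : α ≤ 1) (w : ℝ → ℝ)
    (hw : ∀ t : ℝ, w t = ∑' j : ℕ, c ^ j * t ^ ((j : ℝ) * α) / Real.Gamma ((j : ℝ) * α + 1)) :
    w 0 = 1
      ∧ (α < 1 → ∀ t : ℝ, 0 < t →
          (1 / Real.Gamma (1 - α)) * ∫ s in (0 : ℝ)..t, (t - s) ^ (-α) * deriv w s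
            = c * w t)
      ∧ (α = 1 → ∀ t : ℝ, 0 < t → deriv w t = c * w t) := by
  have hwf : w = fun s : ℝ => ∑' j : ℕ, c ^ j * s ^ ((j : ℝ) * α) /
      Real.Gamma ((j : ℝ) * α + 1) := funext hw
  have hderiv : ∀ s : ℝ, 0 < s → deriv w s
      = ∑' j : ℕ, c ^ j * (((j : ℝ) * α) * s ^ ((j : ℝ) * α - 1)) /
        Real.Gamma ((j : ℝ) * α + 1) := by
    intro s hs
    rw [hwf]
    exact (ml_hasDerivAt c hα0 hs).deriv
  refine ⟨?_, ?_, ?_⟩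
  · -- w 0 = 1
    rw [hw 0, tsum_eq_single 0 ?_]
    · norm_num [Real.Gamma_one]
    · intro j hj
      have : ((j : ℝ) * α) ≠ 0 := by positivity
      rw [Real.zero_rpow this]
      simp
  · -- 0 < α < 1 : Caputo eigenfunction property
    intro hαlt t ht
    have hΓ1α : 0 < Real.Gamma (1 - α) := Real.Gamma_pos_of_pos (by linarith)
    -- integrability of the base functions
    have hbase : ∀ k : ℕ, IntegrableOn
        (fun s => s ^ (((k + 1 : ℕ) : ℝ) * α - 1) * (t - s) ^ (-α)) (Ioc 0 t) := by
      intro k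
      have hp : (-1:ℝ) < ((k + 1 : ℕ) : ℝ) * α - 1 := by
        have : (0:ℝ) < ((k + 1 : ℕ) : ℝ) * α := by positivity
        linarith
      have hq : (-1:ℝ) < -α := by linarith
      have := ml_intble hp hq ht
      rwa [intervalIntegrable_iff_integrableOn_Ioc_of_le ht.le] at this
    -- value of the base integrals (beta function)
    have hbaseval : ∀ k : ℕ, (∫ s in Ioc (0:ℝ) t, s ^ (((k + 1 : ℕ) : ℝ) * α - 1) * (t - s) ^ (-α))
        = Real.Gamma (((k + 1 : ℕ) : ℝ) * α) * Real.Gamma (1 - α) /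
            Real.Gamma (((k + 1 : ℕ) : ℝ) * α + (1 - α))
          * t ^ (((k + 1 : ℕ) : ℝ) * α + (1 - α) - 1) := by
      intro k
      have hu : 0 < ((k + 1 : ℕ) : ℝ) * α := by positivity
      have hv : 0 < 1 - α := by linarith
      have hmb := ml_beta hu hv ht
      have e : (1:ℝ) - α - 1 = -α := by ring
      rw [e, intervalIntegral.integral_of_le ht.le] at hmb
      exact hmb
    -- per-term Gamma algebra, used twice (for c and for |c|)
    have halg : ∀ (d : ℝ) (k : ℕ),
        (d ^ (k+1) * (((k + 1 : ℕ) : ℝ) * α) / Real.Gamma (((k + 1 : ℕ) : ℝ) * α + 1)) *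
          (Real.Gamma (((k + 1 : ℕ) : ℝ) * α) * Real.Gamma (1 - α) /
            Real.Gamma (((k + 1 : ℕ) : ℝ) * α + (1 - α))
            * t ^ (((k + 1 : ℕ) : ℝ) * α + (1 - α) - 1))
        = (Real.Gamma (1 - α) * d) * (d ^ k * t ^ ((k : ℝ) * α) /
            Real.Gamma ((k : ℝ) * α + 1)) := by
      intro d k
      have hY : ((k + 1 : ℕ) : ℝ) * α ≠ 0 := by positivity
      have hΓY : Real.Gamma (((k + 1 : ℕ) : ℝ) * α + 1)
          = (((k + 1 : ℕ) : ℝ) * α) * Real.Gamma (((k + 1 : ℕ) : ℝ) * α) :=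
        Real.Gamma_add_one hY
      have e1 : ((k + 1 : ℕ) : ℝ) * α + (1 - α) = (k : ℝ) * α + 1 := by push_cast; ring
      have e2 : ((k + 1 : ℕ) : ℝ) * α + (1 - α) - 1 = (k : ℝ) * α := by push_cast; ring
      rw [hΓY, e2, e1]
      have hΓY0 : Real.Gamma (((k + 1 : ℕ) : ℝ) * α) ≠ 0 :=
        (Real.Gamma_pos_of_pos (by positivity)).ne'
      have hΓk0 : Real.Gamma ((k : ℝ) * α + 1) ≠ 0 :=
        (Real.Gamma_pos_of_pos (by positivity)).ne'
      field_simp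
      ring
    -- step 1 : rewrite the interval integral as a set integral of a series
    have step1 : (∫ s in (0:ℝ)..t, (t - s) ^ (-α) * deriv w s)
        = ∫ s in Ioc (0:ℝ) t, ∑' j : ℕ, (t - s) ^ (-α) *
            (c ^ j * (((j : ℝ) * α) * s ^ ((j : ℝ) * α - 1)) /
              Real.Gamma ((j : ℝ) * α + 1)) := by
      rw [intervalIntegral.integral_of_le ht.le]
      refine setIntegral_congr_fun measurableSet_Ioc fun s hs => ?_
      rw [hderiv s hs.1, ← tsum_mul_left]
    -- integrability of each term
    have hint : ∀ j : ℕ, Integrable (fun s => (t - s) ^ (-α) *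
        (c ^ j * (((j : ℝ) * α) * s ^ ((j : ℝ) * α - 1)) / Real.Gamma ((j : ℝ) * α + 1)))
        (volume.restrict (Ioc 0 t)) := by
      intro j
      cases j with
      | zero =>
        refine (integrable_zero _ _ _).congr (Filter.Eventually.of_forall fun s => ?_)
        simp
      | succ k =>
        refine ((hbase k).const_mul (c ^ (k+1) * (((k + 1 : ℕ) : ℝ) * α) /
          Real.Gamma (((k + 1 : ℕ) : ℝ) * α + 1))).congr
          (Filter.Eventually.of_forall fun s => ?_)
        push_cast
        ring
    -- values of the signed integrals
    have hival : ∀ j : ℕ, (∫ s in Ioc (0:ℝ) t, (t - s) ^ (-α) *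
        (c ^ j * (((j : ℝ) * α) * s ^ ((j : ℝ) * α - 1)) / Real.Gamma ((j : ℝ) * α + 1)))
        = (Real.Gamma (1 - α) * c) * (Nat.casesOn j 0 (fun k => c ^ k * t ^ ((k : ℝ) * α) /
            Real.Gamma ((k : ℝ) * α + 1)) : ℝ) := by
      intro j
      cases j with
      | zero => simp
      | succ k =>
        have hfun : (fun s => (t - s) ^ (-α) *
            (c ^ (k+1) * ((((k+1:ℕ)) : ℝ) * α * s ^ ((((k+1:ℕ)) : ℝ) * α - 1)) /
              Real.Gamma ((((k+1:ℕ)) : ℝ) * α + 1)))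
            = fun s : ℝ => (c ^ (k+1) * (((k + 1 : ℕ) : ℝ) * α) /
                Real.Gamma (((k + 1 : ℕ) : ℝ) * α + 1)) *
              (s ^ (((k + 1 : ℕ) : ℝ) * α - 1) * (t - s) ^ (-α)) := by
          funext s; ring
        calc (∫ s in Ioc (0:ℝ) t, (t - s) ^ (-α) *
            (c ^ (k+1) * ((((k+1:ℕ)) : ℝ) * α * s ^ ((((k+1:ℕ)) : ℝ) * α - 1)) /
              Real.Gamma ((((k+1:ℕ)) : ℝ) * α + 1)))
            = (c ^ (k+1) * (((k + 1 : ℕ) : ℝ) * α) / Real.Gamma (((k + 1 : ℕ) : ℝ) * α + 1)) *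
              ∫ s in Ioc (0:ℝ) t, s ^ (((k + 1 : ℕ) : ℝ) * α - 1) * (t - s) ^ (-α) := by
              rw [hfun, MeasureTheory.integral_const_mul]
          _ = _ := by rw [hbaseval k, halg c k]
    -- values of the norm integrals and their summability
    have hnval : ∀ j : ℕ, (∫ s in Ioc (0:ℝ) t, ‖(t - s) ^ (-α) *
        (c ^ j * (((j : ℝ) * α) * s ^ ((j : ℝ) * α - 1)) / Real.Gamma ((j : ℝ) * α + 1))‖)
        = (Real.Gamma (1 - α) * |c|) * (Nat.casesOn j 0 (fun k => |c| ^ k * t ^ ((k : ℝ) * α) /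
            Real.Gamma ((k : ℝ) * α + 1)) : ℝ) := by
      intro j
      cases j with
      | zero => simp
      | succ k =>
        have heq : ∀ s ∈ Ioc (0:ℝ) t, ‖(t - s) ^ (-α) *
            (c ^ (k+1) * ((((k+1:ℕ)) : ℝ) * α * s ^ ((((k+1:ℕ)) : ℝ) * α - 1)) /
              Real.Gamma ((((k+1:ℕ)) : ℝ) * α + 1))‖
            = (|c| ^ (k+1) * (((k + 1 : ℕ) : ℝ) * α) /
                Real.Gamma (((k + 1 : ℕ) : ℝ) * α + 1)) *
              (s ^ (((k + 1 : ℕ) : ℝ) * α - 1) * (t - s) ^ (-α)) := by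
          intro s hs
          have hs0 : 0 < s := hs.1
          have hts : 0 ≤ t - s := by linarith [hs.2]
          have h1 : 0 ≤ (t - s) ^ (-α) := Real.rpow_nonneg hts _
          have hΓ : 0 < Real.Gamma ((((k+1:ℕ)) : ℝ) * α + 1) :=
            Real.Gamma_pos_of_pos (by positivity)
          rw [Real.norm_eq_abs, abs_mul, abs_of_nonneg h1, abs_div, abs_of_pos hΓ, abs_mul,
            abs_pow, abs_of_nonneg (by positivity : (0:ℝ) ≤
              (((k+1:ℕ)) : ℝ) * α * s ^ ((((k+1:ℕ)) : ℝ) * α - 1))]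
          ring
        rw [setIntegral_congr_fun measurableSet_Ioc heq, MeasureTheory.integral_const_mul, hbaseval k,
          halg |c| k]
    have hnormsum : Summable (fun j : ℕ => ∫ s in Ioc (0:ℝ) t, ‖(t - s) ^ (-α) *
        (c ^ j * (((j : ℝ) * α) * s ^ ((j : ℝ) * α - 1)) /
          Real.Gamma ((j : ℝ) * α + 1))‖) := by
      simp only [hnval]
      apply Summable.mul_left
      refine (summable_nat_add_iff 1).mp ?_
      exact Summable.congr (ml_term_summable |c| hα0 ht) fun n => rfl
    have hGsum : Summable (fun j : ℕ => (Nat.casesOn j 0 (fun k => c ^ k * t ^ ((k : ℝ) * α) /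
        Real.Gamma ((k : ℝ) * α + 1)) : ℝ)) := by
      refine (summable_nat_add_iff 1).mp ?_
      exact Summable.congr (ml_term_summable c hα0 ht) fun n => rfl
    have hG'tsum : (∑' j : ℕ, (Nat.casesOn j 0 (fun k => c ^ k * t ^ ((k : ℝ) * α) /
        Real.Gamma ((k : ℝ) * α + 1)) : ℝ)) = w t := by
      rw [Summable.tsum_eq_zero_add hGsum, hw t]
      rw [show (Nat.casesOn 0 0 (fun k => c ^ k * t ^ ((k : ℝ) * α) /
        Real.Gamma ((k : ℝ) * α + 1)) : ℝ) = 0 from rfl, zero_add]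
    rw [step1, ← integral_tsum_of_summable_integral_norm hint hnormsum]
    simp only [hival]
    rw [tsum_mul_left, hG'tsum]
    field_simp
  · -- α = 1
    intro hα1' t ht
    subst hα1'
    rw [hderiv t ht, hw t, Summable.tsum_eq_zero_add (ml_deriv_summable c hα0 ht)]
    simp only [Nat.cast_zero, zero_mul, mul_zero, zero_div, zero_add]
    rw [← tsum_mul_left]
    refine tsum_congr fun k => ?_
    have hy : (((k:ℕ) + 1 : ℕ) : ℝ) * 1 ≠ 0 := by positivity
    have hΓ1 : Real.Gamma ((((k:ℕ) + 1 : ℕ) : ℝ) * 1 + 1)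
        = ((((k:ℕ) + 1 : ℕ) : ℝ) * 1) * Real.Gamma ((((k:ℕ) + 1 : ℕ) : ℝ) * 1) :=
      Real.Gamma_add_one hy
    have he1 : (((k + 1 : ℕ) : ℝ) * 1 - 1) = ((k : ℕ) : ℝ) * 1 := by push_cast; ring
    have he2 : (((k + 1 : ℕ) : ℝ) * 1) = ((k : ℕ) : ℝ) * 1 + 1 := by push_cast; ring
    rw [hΓ1, he1, he2]
    have hΓpos : 0 < Real.Gamma (((k:ℕ) : ℝ) * 1 + 1) :=
      Real.Gamma_pos_of_pos (by positivity)
    have hy' : ((k:ℕ) : ℝ) * 1 + 1 ≠ 0 := by positivity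
    rw [pow_succ]
    field_simp
end
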